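/- arXiv:1809.09205 — 3 statements merged into one kernel-verified Lean document; each statement's English description precedes it below -/
import Mathlib

section
/- Let D ⊂ ℝ² be a convex body (a convex compact set with nonempty interior), let x be an interior point of D, let 0 < μ < 1, and let P ∈ 𝒫_n be a polynomial satisfying P(x) = 1 and ‖P‖²_{L²(D)} = λ_n(D,x) (i.e. P is extremal for the Christoffel function at x). Then sup_{y ∈ D_{1−μ,x}} |P(y)| ≤ μ^{-1}, where D_{1−μ,x} := x + (1−μ)(D − x). -/
open MeasureTheory Set
open MvPolynomial
set_option maxHeartbeats 1000000

/-- `ρ_n^*(t) = n⁻² + n⁻¹ √t`. -/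
noncomputable def rhoStar (n : ℕ) (t : ℝ) : ℝ := ((n : ℝ))⁻¹ ^ 2 + (n : ℝ)⁻¹ * Real.sqrt t

/-- The Christoffel function (uniform weight) of a planar compact set:
`λ_n(D,x) = inf { ∫_D P(y)² dy : P ∈ 𝒫_n, P(x) = 1 }`. -/
noncomputable def christoffel (n : ℕ) (D : Set (EuclideanSpace ℝ (Fin 2)))
    (x : EuclideanSpace ℝ (Fin 2)) : ℝ :=
  sInf { I : ℝ | ∃ P : MvPolynomial (Fin 2) ℝ, P.totalDegree ≤ n ∧
    MvPolynomial.eval x P = 1 ∧ I = ∫ y in D, (MvPolynomial.eval y P) ^ 2 }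

lemma my_totalDegree_bind₁_le {σ : Type*} [Fintype σ] [DecidableEq σ]
    (f : σ → MvPolynomial σ ℝ) (hf : ∀ i, (f i).totalDegree ≤ 1)
    (P : MvPolynomial σ ℝ) : (bind₁ f P).totalDegree ≤ P.totalDegree := by
  conv_lhs => rw [P.as_sum]
  rw [map_sum]
  refine (totalDegree_finset_sum _ _).trans (Finset.sup_le fun s hs => ?_)
  rw [bind₁_monomial]
  refine (totalDegree_mul _ _).trans ?_
  rw [totalDegree_C, zero_add]
  calc (∏ i ∈ s.support, f i ^ s i).totalDegree
      ≤ ∑ i ∈ s.support, (f i ^ s i).totalDegree := totalDegree_finset_prod _ _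
    _ ≤ ∑ i ∈ s.support, s i * 1 := Finset.sum_le_sum fun i _ =>
        (totalDegree_pow _ _).trans (Nat.mul_le_mul_left _ (hf i))
    _ = s.sum fun _ e => e := by simp [Finsupp.sum]
    _ ≤ P.totalDegree := le_totalDegree hs


/-- **Corollary (norm control on convex bodies).** If `D ⊂ ℝ²` is a convex body,
`x ∈ int D`, `0 < μ < 1`, and `P ∈ 𝒫_n` satisfies `P(x) = 1` and
`‖P‖²_{L²(D)} = λ_n(D,x)`, then `|P(y)| ≤ μ⁻¹` for all `y ∈ D_{1-μ,x} = x + (1-μ)(D-x)`. -/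
theorem stmt_3 (n : ℕ) (hn : 0 < n) (D : Set (EuclideanSpace ℝ (Fin 2)))
    (hconv : Convex ℝ D) (hcomp : IsCompact D) (hint : (interior D).Nonempty)
    (x : EuclideanSpace ℝ (Fin 2)) (hx : x ∈ interior D)
    (μ : ℝ) (hμ0 : 0 < μ) (hμ1 : μ < 1)
    (P : MvPolynomial (Fin 2) ℝ) (hdeg : P.totalDegree ≤ n)
    (hPx : MvPolynomial.eval x P = 1)
    (hPmin : ∫ y in D, (MvPolynomial.eval y P) ^ 2 = christoffel n D x) :
    ∀ y ∈ (fun z => x + (1 - μ) • (z - x)) '' D, |MvPolynomial.eval y P| ≤ μ⁻¹ := by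
  rintro y ⟨d, hd, rfl⟩
  set y : EuclideanSpace ℝ (Fin 2) := x + (1 - μ) • (d - x) with hy
  set c : ℝ := MvPolynomial.eval y P with hc
  show |c| ≤ μ⁻¹
  by_cases hc0 : c = 0
  · rw [hc0, abs_zero]; positivity
  set g : EuclideanSpace ℝ (Fin 2) → ℝ := fun u => (MvPolynomial.eval u P) ^ 2 with hgdef
  set L : ℝ := ∫ u in D, g u with hLdef
  -- continuity / integrability
  have h1 : Continuous fun v : Fin 2 → ℝ => MvPolynomial.eval v P :=
    MvPolynomial.continuous_eval P
  have hgP : Continuous fun u : EuclideanSpace ℝ (Fin 2) => MvPolynomial.eval u P :=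
    h1.comp (PiLp.continuous_ofLp 2 fun _ : Fin 2 => ℝ)
  have hg : Continuous g := by fun_prop
  have hInt : IntegrableOn g D := hg.continuousOn.integrableOn_compact hcomp
  -- positivity of L
  have hLpos : 0 < L := by
    rw [hLdef, setIntegral_pos_iff_support_of_nonneg_ae
      (Filter.Eventually.of_forall fun u => sq_nonneg _) hInt]
    have hU : IsOpen (interior D ∩ {u : EuclideanSpace ℝ (Fin 2) | (1:ℝ)/2 < g u}) :=
      isOpen_interior.inter (isOpen_lt continuous_const hg)
    have hxU : x ∈ interior D ∩ {u : EuclideanSpace ℝ (Fin 2) | (1:ℝ)/2 < g u} :=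
      ⟨hx, by simp [hgdef, hPx]; norm_num⟩
    refine lt_of_lt_of_le (hU.measure_pos volume ⟨x, hxU⟩) (measure_mono ?_)
    rintro u ⟨hu1, hu2⟩
    exact ⟨fun h => by simp [hgdef] at h; simp [hgdef, h] at hu2; linarith,
      interior_subset hu1⟩
  -- the affine map A
  set A : EuclideanSpace ℝ (Fin 2) → EuclideanSpace ℝ (Fin 2) :=
    fun z => y + μ • (z - x) with hA
  have hAx : A x = y := by simp [hA]
  have hAD : ∀ z ∈ D, A z ∈ D := by
    intro z hz
    have : A z = (1 - μ) • d + μ • z := by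
      rw [hA, hy]; module
    rw [this]
    exact hconv hd hz (by linarith) hμ0.le (by ring)
  -- the composed polynomial
  set f : Fin 2 → MvPolynomial (Fin 2) ℝ :=
    fun i => C (y i - μ * x i) + C μ * X i with hf
  have hf1 : ∀ i, (f i).totalDegree ≤ 1 := by
    intro i
    refine (totalDegree_add _ _).trans (max_le (le_trans (totalDegree_C _).le (by norm_num)) ?_)
    refine (totalDegree_mul _ _).trans ?_
    rw [totalDegree_C, totalDegree_X]
  set Q : MvPolynomial (Fin 2) ℝ := bind₁ f P with hQ
  have hevalQ : ∀ z : EuclideanSpace ℝ (Fin 2),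
      MvPolynomial.eval z Q = MvPolynomial.eval (A z) P := by
    intro z
    have h2 : MvPolynomial.eval z Q = MvPolynomial.eval (fun i => MvPolynomial.eval z (f i)) P :=
      eval₂Hom_bind₁ (RingHom.id ℝ) z f P
    have h3 : (fun i => MvPolynomial.eval z (f i)) = A z := by
      funext i
      simp only [hf, map_add, map_mul, eval_C, eval_X, hA,
        PiLp.add_apply, PiLp.smul_apply, PiLp.sub_apply, smul_eq_mul]
      ring
    exact h2.trans (congrArg (fun w : Fin 2 → ℝ => MvPolynomial.eval w P) h3)
  have hQdeg : Q.totalDegree ≤ n := (my_totalDegree_bind₁_le f hf1 P).trans hdeg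
  -- christoffel ≤ integral of normalized Q
  set Q' : MvPolynomial (Fin 2) ℝ := C c⁻¹ * Q with hQ'
  have hQ'deg : Q'.totalDegree ≤ n := by
    refine (totalDegree_mul _ _).trans ?_
    simpa using hQdeg
  have hQ'x : MvPolynomial.eval x Q' = 1 := by
    simp [hQ', hevalQ x, hAx, ← hc, inv_mul_cancel₀ hc0]
  have hbdd : BddBelow { I : ℝ | ∃ R : MvPolynomial (Fin 2) ℝ, R.totalDegree ≤ n ∧
      MvPolynomial.eval x R = 1 ∧ I = ∫ u in D, (MvPolynomial.eval u R) ^ 2 } := by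
    refine ⟨0, ?_⟩
    rintro I ⟨R, -, -, rfl⟩
    exact integral_nonneg fun u => sq_nonneg _
  have hchris : christoffel n D x ≤ ∫ u in D, (MvPolynomial.eval u Q') ^ 2 := by
    apply csInf_le hbdd
    exact ⟨Q', hQ'deg, hQ'x, rfl⟩
  -- change of variables
  have hD : MeasurableSet D := hcomp.measurableSet
  have hderiv : ∀ z ∈ D, HasFDerivWithinAt A
      (μ • ContinuousLinearMap.id ℝ (EuclideanSpace ℝ (Fin 2))) D z := by
    intro z _
    have h : HasFDerivAt (fun z : EuclideanSpace ℝ (Fin 2) => y + μ • (z - x))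
        (μ • ContinuousLinearMap.id ℝ (EuclideanSpace ℝ (Fin 2))) z :=
      (((hasFDerivAt_id z).sub_const x).const_smul μ).const_add y
    exact h.hasFDerivWithinAt
  have hinj : Set.InjOn A D := by
    intro z1 _ z2 _ h
    have h2 : μ • (z1 - x) = μ • (z2 - x) := by
      have := h; rw [hA] at this; exact add_left_cancel this
    have h3 : z1 - x = z2 - x := smul_right_injective (EuclideanSpace ℝ (Fin 2)) hμ0.ne' h2
    have := sub_left_injective h3
    exact this
  have hdet : |(μ • ContinuousLinearMap.id ℝ (EuclideanSpace ℝ (Fin 2))).det| = μ ^ 2 := by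
    have : (μ • ContinuousLinearMap.id ℝ (EuclideanSpace ℝ (Fin 2))).det
        = μ ^ 2 := by
      rw [ContinuousLinearMap.det]
      have : (μ • ContinuousLinearMap.id ℝ (EuclideanSpace ℝ (Fin 2))).toLinearMap
          = μ • LinearMap.id := rfl
      rw [this, LinearMap.det_smul, LinearMap.det_id, finrank_euclideanSpace_fin, mul_one]
    rw [this, abs_of_pos (by positivity)]
  have hcov : ∫ u in A '' D, g u = μ ^ 2 * ∫ z in D, g (A z) := by
    rw [integral_image_eq_integral_abs_det_fderiv_smul volume hD hderiv hinj g]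
    simp_rw [hdet, smul_eq_mul]
    rw [integral_const_mul]
  -- monotonicity
  have hmono : ∫ u in A '' D, g u ≤ L := by
    refine setIntegral_mono_set hInt
      (Filter.Eventually.of_forall fun u => sq_nonneg _) ?_
    exact HasSubset.Subset.eventuallyLE (fun u ⟨z, hz, hzu⟩ => hzu ▸ hAD z hz)
  -- compute integral of Q'^2
  have hQ'int : ∫ u in D, (MvPolynomial.eval u Q') ^ 2 = c⁻¹ ^ 2 * ∫ z in D, g (A z) := by
    have he : ∀ u : EuclideanSpace ℝ (Fin 2),
        (MvPolynomial.eval u Q') ^ 2 = c⁻¹ ^ 2 * g (A u) := by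
      intro u
      simp only [hQ', map_mul, eval_C, hevalQ u, hgdef]
      ring
    simp_rw [he, integral_const_mul]
  -- conclude
  have hchain : L ≤ c⁻¹ ^ 2 * μ⁻¹ ^ 2 * L := by
    have e1 : L = christoffel n D x := hPmin
    have e2 : ∫ z in D, g (A z) = μ⁻¹ ^ 2 * ∫ u in A '' D, g u := by
      rw [hcov]; field_simp
    calc L = christoffel n D x := e1
      _ ≤ ∫ u in D, (MvPolynomial.eval u Q') ^ 2 := hchris
      _ = c⁻¹ ^ 2 * ∫ z in D, g (A z) := hQ'int
      _ = c⁻¹ ^ 2 * (μ⁻¹ ^ 2 * ∫ u in A '' D, g u) := by rw [e2]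
      _ ≤ c⁻¹ ^ 2 * (μ⁻¹ ^ 2 * L) :=
          mul_le_mul_of_nonneg_left (mul_le_mul_of_nonneg_left hmono (by positivity))
            (by positivity)
      _ = c⁻¹ ^ 2 * μ⁻¹ ^ 2 * L := by ring
  have h4 : 1 ≤ c⁻¹ ^ 2 * μ⁻¹ ^ 2 := by
    by_contra h
    push_neg at h
    nlinarith
  have h5 : c ^ 2 * μ ^ 2 ≤ 1 := by
    have hc2 : 0 < c ^ 2 := by positivity
    have hm2 : 0 < μ ^ 2 := by positivity
    have : c ^ 2 * μ ^ 2 * (c⁻¹ ^ 2 * μ⁻¹ ^ 2) = 1 := by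
      field_simp
    nlinarith
  by_contra h
  push_neg at h
  have habs : 0 ≤ μ⁻¹ := by positivity
  have h7 : μ⁻¹ ^ 2 < c ^ 2 := by
    rw [← sq_abs c]
    exact pow_lt_pow_left₀ h habs (by norm_num)
  have h8 : μ⁻¹ ^ 2 * μ ^ 2 = 1 := by field_simp
  nlinarith [mul_pos hμ0 hμ0]
end

section
/- Let d ≥ 1, let D ⊂ ℝ^d be a convex body (a convex compact set with nonempty interior), let x be an interior point of D, let 0 < μ < 1, and let P be a real polynomial in d variables of total degree at most n satisfying P(x) = 1 and ‖P‖²_{L²(D)} = λ_n(D,x), where λ_n(D,x) := min { ∫_D f(y)² dy : f a real polynomial in d variables of total degree ≤ n, f(x)=1 }. Then sup_{y ∈ D_{1−μ,x}} |P(y)| ≤ μ^{-d/2}, where D_{1−μ,x} := x + (1−μ)(D − x). -/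
open MeasureTheory Set

/-- The Christoffel function (uniform weight) of a compact set in `ℝ^d`:
`λ_n(D,x) = inf { ∫_D P(y)² dy : P a polynomial in d variables of total degree ≤ n, P(x) = 1 }`. -/
noncomputable def christoffelD (d : ℕ) (n : ℕ) (D : Set (EuclideanSpace ℝ (Fin d)))
    (x : EuclideanSpace ℝ (Fin d)) : ℝ :=
  sInf { I : ℝ | ∃ P : MvPolynomial (Fin d) ℝ, P.totalDegree ≤ n ∧
    MvPolynomial.eval x P = 1 ∧ I = ∫ y in D, (MvPolynomial.eval y P) ^ 2 }

/-!
Write `y = x + (1 - μ)(w - x)` with `w ∈ D`. The homothety `T` of centre `w` and ratio `μ` maps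
`D` into `D` (convexity) and `x` to `y`, so `(P ∘ T) / P(y)` is a competitor for `λ_n(D, x)`.
A change of variables bounds its squared `L²(D)` norm by `μ^{-d} λ_n(D, x) / P(y)²`, and
`λ_n(D, x) = ‖P‖² > 0` since `P(x) = 1` at an interior point; hence `P(y)² ≤ μ^{-d}`.
-/

namespace MvPolynomial

variable {R σ τ : Type*} [CommSemiring R]

theorem totalDegree_bind₁_le_of_totalDegree_le_one (s : σ → MvPolynomial τ R)
    (hs : ∀ i, (s i).totalDegree ≤ 1) (P : MvPolynomial σ R) :
    (bind₁ s P).totalDegree ≤ P.totalDegree := by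
  conv_lhs => rw [P.as_sum, map_sum]
  refine totalDegree_finsetSum_le fun m hm => ?_
  rw [bind₁_monomial]
  refine (totalDegree_mul _ _).trans ?_
  rw [totalDegree_C, zero_add]
  refine (totalDegree_finsetProd _ _).trans (le_trans ?_ (le_totalDegree hm))
  refine Finset.sum_le_sum fun i _ => (totalDegree_pow _ _).trans ?_
  simpa using Nat.mul_le_mul_left (m i) (hs i)

theorem exists_totalDegree_le_eval_homothety {ι : Type*} (P : MvPolynomial ι ℝ)
    (c : EuclideanSpace ℝ ι) (r : ℝ) :
    ∃ Q : MvPolynomial ι ℝ, Q.totalDegree ≤ P.totalDegree ∧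
      ∀ z : EuclideanSpace ℝ ι, eval z Q = eval (AffineMap.homothety c r z) P := by
  refine ⟨bind₁ (fun i => C r * X i + C ((1 - r) * c i)) P,
    totalDegree_bind₁_le_of_totalDegree_le_one _ (fun i => ?_) P, fun z => ?_⟩
  · refine (totalDegree_add _ _).trans
      (max_le ((totalDegree_mul _ _).trans ?_) ((totalDegree_C _).trans_le zero_le_one))
    simp
  · refine (eval₂Hom_bind₁ _ _ _ _).trans (congrArg (eval · P) ?_)
    ext i
    simp only [coe_eval₂Hom, eval₂_add, eval₂_mul, eval₂_C, eval₂_X, RingHom.id_apply,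
      AffineMap.homothety_apply, vsub_eq_sub, vadd_eq_add, PiLp.add_apply, PiLp.smul_apply,
      PiLp.sub_apply, smul_eq_mul]
    ring

end MvPolynomial

section ChangeOfVariables

variable {E F : Type*} [NormedAddCommGroup E] [NormedSpace ℝ E] [MeasurableSpace E]
  [BorelSpace E] [FiniteDimensional ℝ E] (μ : Measure E) [μ.IsAddHaarMeasure]
  [NormedAddCommGroup F] [NormedSpace ℝ F]

theorem setIntegral_comp_homothety (f : E → F) (c : E) {r : ℝ} (hr : 0 < r) {s : Set E}
    (hs : MeasurableSet s) :
    ∫ z in s, f (AffineMap.homothety c r z) ∂μ =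
      (r ^ Module.finrank ℝ E)⁻¹ • ∫ z in AffineMap.homothety c r '' s, f z ∂μ := by
  have hderiv : ∀ z ∈ s, HasFDerivWithinAt (AffineMap.homothety c r)
      (r • ContinuousLinearMap.id ℝ E) s z := fun z _ => by
    have : ⇑(AffineMap.homothety c r) = fun z => r • (z - c) + c := by
      ext z; simp [AffineMap.homothety_apply]
    rw [this]
    exact (((hasFDerivAt_id z).sub_const c).const_smul r).add_const c |>.hasFDerivWithinAt
  have hinj : InjOn (AffineMap.homothety c r) s :=
    ((AffineEquiv.homothetyUnitsMulHom c (Units.mk0 r hr.ne')).injective).injOn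
  rw [integral_image_eq_integral_abs_det_fderiv_smul μ hs hderiv hinj, integral_smul, smul_smul]
  simp [ContinuousLinearMap.det, LinearMap.det_smul, abs_of_pos hr, hr.ne']

theorem Convex.setIntegral_comp_homothety_le {D : Set E} (hD : Convex ℝ D)
    (hDm : MeasurableSet D) {f : E → ℝ} (hf : ∀ z, 0 ≤ f z) (hfD : IntegrableOn f D μ)
    {c : E} (hc : c ∈ D) {r : ℝ} (hr₀ : 0 < r) (hr₁ : r ≤ 1) :
    ∫ z in D, f (AffineMap.homothety c r z) ∂μ ≤
      (r ^ Module.finrank ℝ E)⁻¹ * ∫ z in D, f z ∂μ := by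
  rw [setIntegral_comp_homothety μ f c hr₀ hDm, smul_eq_mul]
  have hsub : AffineMap.homothety c r '' D ⊆ D := by
    rintro _ ⟨z, hz, rfl⟩
    rw [AffineMap.homothety_eq_lineMap]
    exact hD.lineMap_mem hc hz ⟨hr₀.le, hr₁⟩
  exact mul_le_mul_of_nonneg_left
    (setIntegral_mono_set hfD (.of_forall hf) (LE.le.eventuallyLE hsub)) (by positivity)

end ChangeOfVariables

theorem setIntegral_pos_of_mem_interior {X : Type*} [TopologicalSpace X] [MeasurableSpace X]
    [OpensMeasurableSpace X] {μ : Measure X} [μ.IsOpenPosMeasure] {f : X → ℝ}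
    (hf : Continuous f) (hf₀ : ∀ z, 0 ≤ f z) {s : Set X} (hfs : IntegrableOn f s μ) {x : X}
    (hx : x ∈ interior s) (hfx : 0 < f x) : 0 < ∫ z in s, f z ∂μ := by
  rw [setIntegral_pos_iff_support_of_nonneg_ae (.of_forall hf₀) hfs]
  have hU : IsOpen (Function.support f ∩ interior s) := hf.isOpen_support.inter isOpen_interior
  exact (hU.measure_pos μ ⟨x, hfx.ne', hx⟩).trans_le
    (measure_mono (inter_subset_inter_right _ interior_subset))

theorem abs_le_rpow_neg_div_two_of_sq_le_inv_pow {a r : ℝ} (hr : 0 < r) {k : ℕ}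
    (h : a ^ 2 ≤ (r ^ k)⁻¹) : |a| ≤ r ^ (-(k : ℝ) / 2) := by
  refine abs_le_of_sq_le_sq ?_ (by positivity)
  rwa [← Real.rpow_natCast (r ^ _), ← Real.rpow_mul hr.le, Nat.cast_ofNat,
    div_mul_cancel₀ _ two_ne_zero, Real.rpow_neg hr.le, Real.rpow_natCast]

section Christoffel

variable {d n : ℕ} {D : Set (EuclideanSpace ℝ (Fin d))} {x : EuclideanSpace ℝ (Fin d)}

theorem christoffelD_le_integral {Q : MvPolynomial (Fin d) ℝ} (hQ : Q.totalDegree ≤ n)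
    (hQx : MvPolynomial.eval x Q = 1) :
    christoffelD d n D x ≤ ∫ y in D, (MvPolynomial.eval y Q) ^ 2 := by
  refine csInf_le ⟨0, ?_⟩ ⟨Q, hQ, hQx, rfl⟩
  rintro _ ⟨R, -, -, rfl⟩
  exact integral_nonneg fun _ => sq_nonneg _

theorem christoffelD_mul_sq_le_integral {Q : MvPolynomial (Fin d) ℝ} (hQ : Q.totalDegree ≤ n) :
    christoffelD d n D x * (MvPolynomial.eval x Q) ^ 2 ≤
      ∫ y in D, (MvPolynomial.eval y Q) ^ 2 := by
  set a := MvPolynomial.eval x Q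
  rcases eq_or_ne a 0 with ha | ha
  · rw [ha, zero_pow two_ne_zero, mul_zero]
    exact integral_nonneg fun _ => sq_nonneg _
  have hR : (MvPolynomial.C a⁻¹ * Q).totalDegree ≤ n :=
    (MvPolynomial.totalDegree_mul _ _).trans (by simpa using hQ)
  have hRx : MvPolynomial.eval x (MvPolynomial.C a⁻¹ * Q) = 1 := by simp [a, ha]
  calc christoffelD d n D x * a ^ 2
      ≤ (∫ y in D, (MvPolynomial.eval y (MvPolynomial.C a⁻¹ * Q)) ^ 2) * a ^ 2 := by
        gcongr
        exact christoffelD_le_integral hR hRx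
    _ = ∫ y in D, (MvPolynomial.eval y Q) ^ 2 := by
        simp_rw [map_mul, MvPolynomial.eval_C, mul_pow, integral_const_mul]
        field_simp

end Christoffel

theorem stmt_4_general (d : ℕ) (n : ℕ)
    (D : Set (EuclideanSpace ℝ (Fin d)))
    (hconv : Convex ℝ D) (hcomp : IsCompact D)
    (x : EuclideanSpace ℝ (Fin d)) (hx : x ∈ interior D)
    (μ : ℝ) (hμ0 : 0 < μ) (hμ1 : μ < 1)
    (P : MvPolynomial (Fin d) ℝ) (hdeg : P.totalDegree ≤ n)
    (hPx : MvPolynomial.eval x P = 1)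
    (hPmin : ∫ y in D, (MvPolynomial.eval y P) ^ 2 = christoffelD d n D x) :
    ∀ y ∈ (fun z => x + (1 - μ) • (z - x)) '' D,
      |MvPolynomial.eval y P| ≤ μ ^ (-(d : ℝ) / 2) := by
  rintro _ ⟨w, hw, rfl⟩
  set a := MvPolynomial.eval (x + (1 - μ) • (w - x)) P
  have hPc : Continuous fun z : EuclideanSpace ℝ (Fin d) => MvPolynomial.eval z P :=
    (MvPolynomial.continuous_eval P).comp (PiLp.continuous_ofLp 2 _)
  have hPD : IntegrableOn (fun z : EuclideanSpace ℝ (Fin d) => (MvPolynomial.eval z P) ^ 2) D :=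
    (hPc.pow 2).continuousOn.integrableOn_compact hcomp
  have hpos : 0 < christoffelD d n D x :=
    hPmin ▸ setIntegral_pos_of_mem_interior (hPc.pow 2) (fun _ => sq_nonneg _) hPD hx
      (by simp [hPx])
  obtain ⟨Q, hQdeg, hQ⟩ := MvPolynomial.exists_totalDegree_le_eval_homothety P w μ
  have hTx : AffineMap.homothety w μ x = x + (1 - μ) • (w - x) := by
    rw [AffineMap.homothety_apply, vsub_eq_sub, vadd_eq_add]
    module
  have hQx : MvPolynomial.eval x Q = a := by rw [hQ, hTx]
  have key : christoffelD d n D x * a ^ 2 ≤ (μ ^ d)⁻¹ * christoffelD d n D x := by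
    calc christoffelD d n D x * a ^ 2 ≤ ∫ z in D, (MvPolynomial.eval z Q) ^ 2 :=
          hQx ▸ christoffelD_mul_sq_le_integral (hQdeg.trans hdeg)
      _ ≤ (μ ^ d)⁻¹ * christoffelD d n D x := by
          simp_rw [hQ, ← hPmin]
          simpa using hconv.setIntegral_comp_homothety_le volume hcomp.measurableSet
            (fun _ => sq_nonneg _) hPD hw hμ0 hμ1.le
  exact abs_le_rpow_neg_div_two_of_sq_le_inv_pow hμ0 (le_of_mul_le_mul_left (by linarith) hpos)

/-- **Remark (norm control on convex bodies, `ℝ^d` version).** If `D ⊂ ℝ^d` (`d ≥ 1`) is a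
convex body, `x ∈ int D`, `0 < μ < 1`, and `P` is a real polynomial in `d` variables of total
degree at most `n` satisfying `P(x) = 1` and `‖P‖²_{L²(D)} = λ_n(D,x)`, then
`|P(y)| ≤ μ^{-d/2}` for all `y ∈ D_{1-μ,x} = x + (1-μ)(D-x)`. -/
theorem stmt_4 (d : ℕ) (hd : 1 ≤ d) (n : ℕ) (hn : 0 < n)
    (D : Set (EuclideanSpace ℝ (Fin d)))
    (hconv : Convex ℝ D) (hcomp : IsCompact D) (hint : (interior D).Nonempty)
    (x : EuclideanSpace ℝ (Fin d)) (hx : x ∈ interior D)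
    (μ : ℝ) (hμ0 : 0 < μ) (hμ1 : μ < 1)
    (P : MvPolynomial (Fin d) ℝ) (hdeg : P.totalDegree ≤ n)
    (hPx : MvPolynomial.eval x P = 1)
    (hPmin : ∫ y in D, (MvPolynomial.eval y P) ^ 2 = christoffelD d n D x) :
    ∀ y ∈ (fun z => x + (1 - μ) • (z - x)) '' D,
      |MvPolynomial.eval y P| ≤ μ ^ (-(d : ℝ) / 2) :=
  stmt_4_general d n D hconv hcomp x hx μ hμ0 hμ1 P hdeg hPx hPmin
end

section
/- There is an absolute constant c > 0 with the following property: for any t ∈ [0,1] and any positive integer n there exists a univariate real polynomial Q of degree at most n/2 such that Q(1−t) = 1 and |Q(s)| ≤ c ρ_n*(t) / (ρ_n*(t) + |1 − t − s|) for all s ∈ [−1,1]. -/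
/-!
Put `θ₀ = arccos (1 - t)`, `M = ⌊n/2⌋ + 1` and `F_M(u) = |∑_{k<M} e^{iku}|² = ∑_{j,k<M} cos((j-k)u)`.
Since `2 cos(mθ₀) cos(mθ) = cos(m(θ-θ₀)) + cos(m(θ+θ₀))`, the function
`θ ↦ F_M(θ-θ₀) + F_M(θ+θ₀)` is `P(cos θ)` for the polynomial `P = ∑_{j,k<M} 2 cos((j-k)θ₀) T_{j-k}`
of degree `M - 1 ≤ n/2`, and `Q = P / P(1-t)`. Now `P(1-t) ≥ F_M(0) = M²`, while
`F_M ≤ M²` and `sin²(u/2) F_M(u) = sin²(Mu/2) ≤ 1`. For `s = cos θ` we have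
`|1-t-s| = 2ab` with `a = |sin((θ-θ₀)/2)| ≤ b = |sin((θ+θ₀)/2)| ≤ a + 2 sin(θ₀/2)` and
`sin(θ₀/2) ≤ √t`; together these give `P(s) (ρ + |1-t-s|) ≤ 18 M² ρ` for `ρ = ρ_n^*(t)`.
-/

open Set

section FastDecreasing

open Real Polynomial Finset

/-- `M` times the Fejér kernel of order `M - 1`, i.e. `|∑_{k<M} e^{iku}|²`. -/
noncomputable def fejerKernel (M : ℕ) (u : ℝ) : ℝ :=
  ∑ j ∈ range M, ∑ k ∈ range M, cos (((j : ℝ) - k) * u)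

lemma fejerKernel_eq_sq_add_sq (M : ℕ) (u : ℝ) :
    fejerKernel M u = (∑ k ∈ range M, cos (k * u)) ^ 2 + (∑ k ∈ range M, sin (k * u)) ^ 2 := by
  simp only [fejerKernel, sq, sum_mul_sum, ← sum_add_distrib, sub_mul, cos_sub]

lemma fejerKernel_nonneg (M : ℕ) (u : ℝ) : 0 ≤ fejerKernel M u := by
  rw [fejerKernel_eq_sq_add_sq]
  positivity

lemma fejerKernel_le_sq (M : ℕ) (u : ℝ) : fejerKernel M u ≤ (M : ℝ) ^ 2 := by
  calc fejerKernel M u ≤ ∑ _j ∈ range M, ∑ _k ∈ range M, (1 : ℝ) :=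
        sum_le_sum fun _ _ => sum_le_sum fun _ _ => cos_le_one _
    _ = (M : ℝ) ^ 2 := by simp [sq]

lemma fejerKernel_zero (M : ℕ) : fejerKernel M 0 = (M : ℝ) ^ 2 := by
  simp [fejerKernel, sq]

lemma sin_sq_half_mul_fejerKernel (M : ℕ) (u : ℝ) :
    sin (u / 2) ^ 2 * fejerKernel M u = sin (M * u / 2) ^ 2 := by
  -- telescoping: `2 sin(u/2) cos(ku) = sin((k+½)u) - sin((k-½)u)`, and similarly for `sin(ku)`
  set f : ℕ → ℝ := fun k => sin ((k - 1 / 2) * u)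
  set g : ℕ → ℝ := fun k => cos ((k - 1 / 2) * u)
  have hcos : 2 * sin (u / 2) * ∑ k ∈ range M, cos (k * u) = f M - f 0 := by
    rw [mul_sum, ← sum_range_sub]
    refine sum_congr rfl fun k _ => ?_
    simp only [f, sin_sub_sin]
    push_cast
    ring_nf
  have hsin : 2 * sin (u / 2) * ∑ k ∈ range M, sin (k * u) = g 0 - g M := by
    rw [mul_sum, ← neg_sub, ← sum_range_sub, ← sum_neg_distrib]
    refine sum_congr rfl fun k _ => ?_
    simp only [g, cos_sub_cos]
    push_cast
    ring_nf
  have hM : g M * g 0 + f M * f 0 = cos (M * u) := by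
    simp only [f, g]
    rw [← cos_sub]
    congr 1
    push_cast
    ring
  have hf := sin_sq_add_cos_sq ((M - 1 / 2) * u)
  have hg := sin_sq_add_cos_sq ((((0 : ℕ) : ℝ) - 1 / 2) * u)
  have hsq_sum : (2 * sin (u / 2) * ∑ k ∈ range M, cos (k * u)) ^ 2
      + (2 * sin (u / 2) * ∑ k ∈ range M, sin (k * u)) ^ 2 = 2 - 2 * cos (M * u) := by
    rw [hcos, hsin]
    simp only [f, g] at hM ⊢
    linear_combination hf + hg - 2 * hM
  have hhalf := sin_sq_eq_half_sub (M * u / 2)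
  rw [mul_div_cancel₀ _ two_ne_zero] at hhalf
  rw [fejerKernel_eq_sq_add_sq]
  linear_combination hsq_sum / 4 - hhalf

lemma abs_sin_half_mul_fejerKernel_le (M : ℕ) (u : ℝ) :
    |sin (u / 2)| * fejerKernel M u ≤ M := by
  have hF := fejerKernel_nonneg M u
  have hsq : (|sin (u / 2)| * fejerKernel M u) ^ 2 ≤ (M : ℝ) ^ 2 :=
    calc (|sin (u / 2)| * fejerKernel M u) ^ 2
        = sin (M * u / 2) ^ 2 * fejerKernel M u := by
          rw [mul_pow, sq_abs, sq (fejerKernel M u), ← mul_assoc, sin_sq_half_mul_fejerKernel]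
      _ ≤ 1 * (M : ℝ) ^ 2 := mul_le_mul (sin_sq_le_one _) (fejerKernel_le_sq M u) hF zero_le_one
      _ = (M : ℝ) ^ 2 := one_mul _
  exact (pow_le_pow_iff_left₀ (by positivity) (Nat.cast_nonneg M) two_ne_zero).1 hsq

lemma sin_sq_half_mul_fejerKernel_le_one (M : ℕ) (u : ℝ) :
    sin (u / 2) ^ 2 * fejerKernel M u ≤ 1 :=
  (sin_sq_half_mul_fejerKernel M u).trans_le (sin_sq_le_one _)

noncomputable def fastDecrPoly (M : ℕ) (θ₀ : ℝ) : ℝ[X] :=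
  ∑ j ∈ range M, ∑ k ∈ range M, C (2 * cos (((j : ℝ) - k) * θ₀)) * Chebyshev.T ℝ ((j : ℤ) - k)

lemma natDegree_fastDecrPoly_le (M : ℕ) (θ₀ : ℝ) : (fastDecrPoly M θ₀).natDegree ≤ M - 1 := by
  refine natDegree_sum_le_of_forall_le _ _ fun j hj => natDegree_sum_le_of_forall_le _ _
    fun k hk => (natDegree_C_mul_le _ _).trans ?_
  rw [Chebyshev.natDegree_T]
  rw [Finset.mem_range] at hj hk
  omega

lemma fastDecrPoly_eval_cos (M : ℕ) (θ₀ θ : ℝ) :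
    (fastDecrPoly M θ₀).eval (cos θ) = fejerKernel M (θ - θ₀) + fejerKernel M (θ + θ₀) := by
  simp only [fastDecrPoly, fejerKernel, eval_finsetSum, eval_mul, eval_C, Chebyshev.T_real_cos,
    ← sum_add_distrib]
  refine sum_congr rfl fun j _ => sum_congr rfl fun k _ => ?_
  push_cast
  rw [mul_sub, mul_add, cos_sub, cos_add]
  ring_nf


lemma abs_sin_half_sub_le_abs_sin_half_add {θ₀ θ : ℝ} (hθ₀ : θ₀ ∈ Icc 0 π) (hθ : θ ∈ Icc 0 π) :
    |sin ((θ - θ₀) / 2)| ≤ |sin ((θ + θ₀) / 2)| := by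
  have hdiff : sin ((θ + θ₀) / 2) ^ 2 - sin ((θ - θ₀) / 2) ^ 2 = sin θ * sin θ₀ := by
    rw [add_div, sub_div, sin_add, sin_sub, ← mul_div_cancel₀ θ two_ne_zero,
      ← mul_div_cancel₀ θ₀ two_ne_zero, sin_two_mul, sin_two_mul]
    ring_nf
  rw [← sq_le_sq]
  nlinarith [mul_nonneg (sin_nonneg_of_nonneg_of_le_pi hθ.1 hθ.2)
    (sin_nonneg_of_nonneg_of_le_pi hθ₀.1 hθ₀.2)]

lemma abs_sin_half_add_le (θ₀ θ : ℝ) :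
    |sin ((θ + θ₀) / 2)| ≤ |sin ((θ - θ₀) / 2)| + 2 * |sin (θ₀ / 2)| := by
  have h : sin ((θ + θ₀) / 2) = sin ((θ - θ₀) / 2) + 2 * cos (θ / 2) * sin (θ₀ / 2) := by
    rw [add_div, sub_div, sin_add, sin_sub]
    ring
  rw [h]
  refine (abs_add_le _ _).trans (add_le_add_right ?_ _)
  rw [abs_mul, abs_mul, abs_two]
  nlinarith [abs_cos_le_one (θ / 2), abs_nonneg (sin (θ₀ / 2))]

lemma abs_cos_sub_cos (x y : ℝ) :
    |cos y - cos x| = 2 * |sin ((x + y) / 2)| * |sin ((x - y) / 2)| := by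
  rw [cos_sub_cos, abs_mul, abs_mul, abs_neg, abs_two, add_comm y, ← abs_neg (sin ((y - x) / 2)),
    ← sin_neg, ← neg_div, neg_sub]

lemma fastDecrPoly_eval_cos_nonneg (M : ℕ) (θ₀ θ : ℝ) : 0 ≤ (fastDecrPoly M θ₀).eval (cos θ) := by
  rw [fastDecrPoly_eval_cos]
  exact add_nonneg (fejerKernel_nonneg _ _) (fejerKernel_nonneg _ _)

lemma fastDecrPoly_eval_cos_le (M : ℕ) (θ₀ θ : ℝ) :
    (fastDecrPoly M θ₀).eval (cos θ) ≤ 2 * (M : ℝ) ^ 2 := by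
  rw [fastDecrPoly_eval_cos]
  linarith [fejerKernel_le_sq M (θ - θ₀), fejerKernel_le_sq M (θ + θ₀)]

lemma sq_le_fastDecrPoly_eval_cos_self (M : ℕ) (θ₀ : ℝ) :
    (M : ℝ) ^ 2 ≤ (fastDecrPoly M θ₀).eval (cos θ₀) := by
  rw [fastDecrPoly_eval_cos, sub_self, fejerKernel_zero]
  linarith [fejerKernel_nonneg M (θ₀ + θ₀)]

lemma fastDecrPoly_eval_cos_mul_abs_cos_sub_le (M : ℕ) {θ₀ θ : ℝ} (hθ₀ : θ₀ ∈ Icc 0 π)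
    (hθ : θ ∈ Icc 0 π) :
    (fastDecrPoly M θ₀).eval (cos θ) * |cos θ₀ - cos θ| ≤ 4 + 4 * M * sin (θ₀ / 2) := by
  have hσ : 0 ≤ sin (θ₀ / 2) := sin_nonneg_of_nonneg_of_le_pi (by linarith [hθ₀.1])
    (by linarith [hθ₀.2, pi_pos])
  have hab := abs_sin_half_sub_le_abs_sin_half_add hθ₀ hθ
  have hba := abs_sin_half_add_le θ₀ θ
  rw [abs_of_nonneg hσ] at hba
  have ha := abs_nonneg (sin ((θ - θ₀) / 2))
  have hF₁ := fejerKernel_nonneg M (θ - θ₀)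
  have hF₂ := fejerKernel_nonneg M (θ + θ₀)
  have h₁ := abs_sin_half_mul_fejerKernel_le M (θ - θ₀)
  have h₁' := sin_sq_half_mul_fejerKernel_le_one M (θ - θ₀)
  have h₂' := sin_sq_half_mul_fejerKernel_le_one M (θ + θ₀)
  rw [← sq_abs] at h₁' h₂'
  rw [fastDecrPoly_eval_cos, abs_cos_sub_cos]
  -- `2ab F(θ+θ₀) ≤ 2b² F(θ+θ₀) ≤ 2` and `2ab F(θ-θ₀) ≤ 2a² F(θ-θ₀) + 4 sin(θ₀/2) a F(θ-θ₀)`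
  set a := |sin ((θ - θ₀) / 2)|
  set b := |sin ((θ + θ₀) / 2)|
  have k₁ : b * a * fejerKernel M (θ - θ₀) ≤ (a + 2 * sin (θ₀ / 2)) * a * fejerKernel M (θ - θ₀) :=
    mul_le_mul_of_nonneg_right (mul_le_mul_of_nonneg_right hba ha) hF₁
  have k₂ : b * a * fejerKernel M (θ + θ₀) ≤ b * b * fejerKernel M (θ + θ₀) :=
    mul_le_mul_of_nonneg_right (mul_le_mul_of_nonneg_left hab (ha.trans hab)) hF₂
  nlinarith

lemma fastDecrPoly_eval_div_le {M : ℕ} (hM : 0 < M) {θ₀ θ r : ℝ} (hθ₀ : θ₀ ∈ Icc 0 π)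
    (hθ : θ ∈ Icc 0 π) (hr : 1 + 2 * M * sin (θ₀ / 2) ≤ 4 * M ^ 2 * r) :
    (fastDecrPoly M θ₀).eval (cos θ) / (fastDecrPoly M θ₀).eval (cos θ₀)
      ≤ 18 * r / (r + |cos θ₀ - cos θ|) := by
  have hσ : 0 ≤ sin (θ₀ / 2) := sin_nonneg_of_nonneg_of_le_pi (by linarith [hθ₀.1])
    (by linarith [hθ₀.2, pi_pos])
  have hM2 : (0 : ℝ) < M ^ 2 := by positivity
  have hr0 : 0 < r := by nlinarith
  have hE := fastDecrPoly_eval_cos_le M θ₀ θ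
  have hEd := fastDecrPoly_eval_cos_mul_abs_cos_sub_le M hθ₀ hθ
  calc (fastDecrPoly M θ₀).eval (cos θ) / (fastDecrPoly M θ₀).eval (cos θ₀)
      ≤ (fastDecrPoly M θ₀).eval (cos θ) / M ^ 2 :=
        div_le_div_of_nonneg_left (fastDecrPoly_eval_cos_nonneg M θ₀ θ) hM2
          (sq_le_fastDecrPoly_eval_cos_self M θ₀)
    _ ≤ 18 * r / (r + |cos θ₀ - cos θ|) := by
        rw [div_le_div_iff₀ hM2 (by positivity)]
        nlinarith [mul_le_mul_of_nonneg_right hE hr0.le]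

lemma sin_half_le_sqrt_one_sub_cos (x : ℝ) : sin (x / 2) ≤ √(1 - cos x) := by
  refine (le_abs_self _).trans (abs_le_sqrt ?_)
  have := sin_sq_eq_half_sub (x / 2)
  rw [mul_div_cancel₀ _ two_ne_zero] at this
  linarith [cos_le_one x]

lemma one_add_two_mul_sqrt_le_rhoStar {n M : ℕ} (hn : 0 < n) (hnM : n ≤ 2 * M) (t : ℝ) :
    1 + 2 * M * √t ≤ 4 * M ^ 2 * rhoStar n t := by
  have hq : 1 ≤ 2 * M * (n : ℝ)⁻¹ := by
    rw [← div_eq_mul_inv, le_div_iff₀ (by exact_mod_cast hn)]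
    exact_mod_cast (one_mul n).trans_le hnM
  have hs := sqrt_nonneg t
  calc 1 + 2 * M * √t ≤ (2 * M * (n : ℝ)⁻¹) ^ 2 + 2 * M * (n : ℝ)⁻¹ * (2 * M * √t) := by
        nlinarith [mul_le_mul_of_nonneg_right hq (by positivity : (0 : ℝ) ≤ 2 * M * √t)]
    _ = 4 * M ^ 2 * rhoStar n t := by
        rw [rhoStar]
        ring

end FastDecreasing

/-- **Lemma (univariate fast decreasing polynomial).** There is an absolute constant `c > 0`
such that for every `t ∈ [0,1]` and every positive integer `n` there is a univariate real
polynomial `Q` of degree at most `n/2` with `Q(1-t) = 1` and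
`|Q(s)| ≤ c ρ_n^*(t) / (ρ_n^*(t) + |1-t-s|)` for all `s ∈ [-1,1]`. -/
theorem stmt_6 :
    ∃ c : ℝ, 0 < c ∧ ∀ t ∈ Icc (0:ℝ) 1, ∀ n : ℕ, 0 < n →
      ∃ Q : Polynomial ℝ, 2 * Q.natDegree ≤ n ∧ Q.eval (1 - t) = 1 ∧
        ∀ s ∈ Icc (-1:ℝ) 1,
          |Q.eval s| ≤ c * rhoStar n t / (rhoStar n t + |1 - t - s|) := by
  refine ⟨18, by norm_num, fun t ⟨ht₀, ht₁⟩ n hn => ?_⟩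
  set M := n / 2 + 1
  set θ₀ := Real.arccos (1 - t)
  have hcos : Real.cos θ₀ = 1 - t := Real.cos_arccos (by linarith) (by linarith)
  have hθ₀ : θ₀ ∈ Icc 0 Real.pi := ⟨Real.arccos_nonneg _, Real.arccos_le_pi _⟩
  have hr : 1 + 2 * M * Real.sin (θ₀ / 2) ≤ 4 * M ^ 2 * rhoStar n t := by
    have hσ := sin_half_le_sqrt_one_sub_cos θ₀
    rw [hcos, sub_sub_cancel] at hσ
    calc 1 + 2 * M * Real.sin (θ₀ / 2) ≤ 1 + 2 * M * √t := by gcongr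
      _ ≤ 4 * M ^ 2 * rhoStar n t := one_add_two_mul_sqrt_le_rhoStar hn (by omega) t
  set P := fastDecrPoly M θ₀
  have hP : 0 < P.eval (1 - t) := by
    rw [← hcos]
    exact (by positivity : (0 : ℝ) < M ^ 2).trans_le (sq_le_fastDecrPoly_eval_cos_self M θ₀)
  refine ⟨Polynomial.C (P.eval (1 - t))⁻¹ * P, ?_, ?_, fun s ⟨hs₁, hs₂⟩ => ?_⟩
  · have hdeg : P.natDegree ≤ n / 2 := natDegree_fastDecrPoly_le M θ₀
    have := Polynomial.natDegree_C_mul_le (P.eval (1 - t))⁻¹ P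
    omega
  · rw [Polynomial.eval_mul, Polynomial.eval_C, inv_mul_cancel₀ hP.ne']
  · rw [Polynomial.eval_mul, Polynomial.eval_C, inv_mul_eq_div, ← Real.cos_arccos hs₁ hs₂, ← hcos,
      abs_of_nonneg (div_nonneg (fastDecrPoly_eval_cos_nonneg _ _ _) (hcos ▸ hP.le))]
    exact fastDecrPoly_eval_div_le (by omega) hθ₀ ⟨Real.arccos_nonneg _, Real.arccos_le_pi _⟩ hr
end
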